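/- For every real α₀ > 1 and every ε > 0, there exist a finite set Y and a joint probability distribution P_{X,Y} on {0,1} × Y such that H_{α₀}(X|Y) > 1 − ε while H_{α₀+1}(X|Y) < ε. In particular, conditional Rényi entropies of orders α₀ and α₀ + 1 of the same pair (X,Y) can be arbitrarily close to the opposite extremal values 1 and 0 simultaneously. -/

import Mathlib

/-- `rpow0 a α = a ^ α` (real power) with the convention `0 ^ 0 = 0`,
so that at `α = 0` sums of `rpow0` count support sizes. -/
noncomputable def rpow0 (a α : ℝ) : ℝ := if a = 0 then 0 else a ^ α

/-- Conditional Rényi entropy of order `α` (base-2 logarithm) of a joint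
distribution `p` on `X × Y`:
`H_α(X|Y) = (1/(1-α)) * log₂ ((Σ_{x,y} p(x,y)^α) / (Σ_y P_Y(y)^α))`. -/
noncomputable def condRenyi {X Y : Type*} [Fintype X] [Fintype Y]
    (α : ℝ) (p : X × Y → ℝ) : ℝ :=
  (1 - α)⁻¹ * Real.logb 2
    ((∑ z : X × Y, rpow0 (p z) α) / (∑ y : Y, rpow0 (∑ x : X, p (x, y)) α))

/-!
Take `n` symbols `y` under which `X` is uniform, each of weight `2`, and one extra symbol of
weight `a` that determines `X`. Up to normalisation,
`Σ p^α / Σ P_Y^α = (a^α + 2n) / (a^α + 2^α n)`, so `H_α(X|Y)` is close to `1` when `a^α ≪ n`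
and close to `0` when `a^α ≫ n`. With `a = n^γ` and `γ = 2 / (2α₀ + 1)`, we have
`a^α₀ = n^(1 - γ/2)` and `a^(α₀+1) = n^(1 + γ/2)`, so both happen at once as `n → ∞`.
-/

open Real Filter Topology

lemma rpow0_of_pos {a : ℝ} (ha : 0 < a) (α : ℝ) : rpow0 a α = a ^ α := if_neg ha.ne'

lemma rpow0_zero (α : ℝ) : rpow0 0 α = 0 := if_pos rfl

lemma rpow0_mul {c a : ℝ} (hc : 0 < c) (ha : 0 ≤ a) (α : ℝ) :
    rpow0 (c * a) α = c ^ α * rpow0 a α := by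
  rcases ha.eq_or_lt with rfl | ha
  · simp [rpow0]
  · rw [rpow0_of_pos (mul_pos hc ha), rpow0_of_pos ha, mul_rpow hc.le ha.le]

lemma condRenyi_const_mul {X Y : Type*} [Fintype X] [Fintype Y] {c : ℝ} (hc : 0 < c)
    {p : X × Y → ℝ} (hp : ∀ z, 0 ≤ p z) (α : ℝ) :
    condRenyi α (fun z => c * p z) = condRenyi α p := by
  have hmarg : ∀ y, 0 ≤ ∑ x, p (x, y) := fun y => Finset.sum_nonneg fun x _ => hp (x, y)
  simp only [condRenyi, ← Finset.mul_sum, rpow0_mul hc (hp _), rpow0_mul hc (hmarg _),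
    mul_div_mul_left _ _ (rpow_pos_of_pos hc α).ne']

lemma exists_condRenyi_eq_of_sum_pos {X Y : Type*} [Fintype X] [Fintype Y]
    {w : X × Y → ℝ} (hw : ∀ z, 0 ≤ w z) (hsum : 0 < ∑ z, w z) :
    ∃ p : X × Y → ℝ, (∀ z, 0 ≤ p z) ∧ ∑ z, p z = 1 ∧ ∀ α, condRenyi α p = condRenyi α w :=
  ⟨fun z => (∑ z, w z)⁻¹ * w z, fun z => mul_nonneg (inv_nonneg.2 hsum.le) (hw z),
    by rw [← Finset.mul_sum, inv_mul_cancel₀ hsum.ne'],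
    condRenyi_const_mul (inv_pos.2 hsum) hw⟩

lemma ZMod.sum_univ_two {M : Type*} [AddCommMonoid M] (f : ZMod 2 → M) :
    ∑ x, f x = f 0 + f 1 :=
  Fin.sum_univ_two f

noncomputable def spikeWeights (a : ℝ) (n : ℕ) : ZMod 2 × Fin (n + 1) → ℝ :=
  fun z => if z.2 = 0 then (if z.1 = 0 then a else 0) else 1

section spikeWeights

variable {a : ℝ} {n : ℕ}

lemma spikeWeights_nonneg (ha : 0 ≤ a) (z : ZMod 2 × Fin (n + 1)) : 0 ≤ spikeWeights a n z := by
  unfold spikeWeights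
  split_ifs <;> norm_num [ha]

lemma sum_comp_spikeWeights {f : ℝ → ℝ} (hf : f 0 = 0) :
    ∑ z, f (spikeWeights a n z) = f a + 2 * n * f 1 := by
  simp only [spikeWeights, Fintype.sum_prod_type, Fin.sum_univ_succ, ↓reduceIte, Fin.succ_ne_zero,
    Finset.sum_const, Finset.card_univ, Fintype.card_fin, nsmul_eq_mul, ZMod.sum_univ_two,
    one_ne_zero, hf, zero_add]
  ring

lemma sum_spikeWeights : ∑ z, spikeWeights a n z = a + 2 * n := by
  simpa using sum_comp_spikeWeights (a := a) (n := n) (f := id) rfl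

lemma sum_rpow0_spikeWeights (ha : 0 < a) (α : ℝ) :
    ∑ z, rpow0 (spikeWeights a n z) α = a ^ α + 2 * n := by
  simpa [rpow0_of_pos ha, rpow0_of_pos one_pos] using
    sum_comp_spikeWeights (a := a) (n := n) (f := (rpow0 · α)) (rpow0_zero α)

lemma sum_comp_marginal_spikeWeights (f : ℝ → ℝ) :
    ∑ y, f (∑ x, spikeWeights a n (x, y)) = f a + n * f 2 := by
  simp [spikeWeights, Fin.sum_univ_succ]

lemma sum_rpow0_marginal_spikeWeights (ha : 0 < a) (α : ℝ) :
    ∑ y, rpow0 (∑ x, spikeWeights a n (x, y)) α = a ^ α + 2 ^ α * n := by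
  rw [sum_comp_marginal_spikeWeights (rpow0 · α), rpow0_of_pos ha, rpow0_of_pos two_pos,
    mul_comm]

end spikeWeights

noncomputable def spikeEntropy (α s : ℝ) : ℝ :=
  (1 - α)⁻¹ * logb 2 ((s + 2) / (s + 2 ^ α))

lemma condRenyi_spikeWeights {a : ℝ} (ha : 0 < a) {n : ℕ} (hn : 0 < n) (α : ℝ) :
    condRenyi α (spikeWeights a n) = spikeEntropy α (a ^ α / n) := by
  have hn' : (0 : ℝ) < n := Nat.cast_pos.2 hn
  rw [condRenyi, spikeEntropy, sum_rpow0_spikeWeights ha, sum_rpow0_marginal_spikeWeights ha]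
  congr 2
  field_simp

lemma tendsto_spikeEntropy_zero {α : ℝ} (hα : α ≠ 1) :
    Tendsto (spikeEntropy α) (𝓝 0) (𝓝 1) := by
  have h2 : (0 : ℝ) < 2 ^ α := rpow_pos_of_pos two_pos α
  have hcont : ContinuousAt (spikeEntropy α) 0 := by
    unfold spikeEntropy
    refine continuousAt_const.mul ((continuousAt_logb (by positivity)).comp ?_)
    exact (continuousAt_id.add continuousAt_const).div (continuousAt_id.add continuousAt_const)
      (by positivity)
  have hval : spikeEntropy α 0 = 1 := by
    have h2α : (2 : ℝ) / 2 ^ α = 2 ^ (1 - α) := by rw [rpow_sub two_pos, rpow_one]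
    rw [spikeEntropy, zero_add, zero_add, h2α, logb_rpow two_pos (by norm_num),
      inv_mul_cancel₀ (sub_ne_zero.2 hα.symm)]
  simpa [hval] using hcont.tendsto

lemma tendsto_spikeEntropy_atTop (α : ℝ) : Tendsto (spikeEntropy α) atTop (𝓝 0) := by
  have hratio : Tendsto (fun s : ℝ => (s + 2) / (s + 2 ^ α)) atTop (𝓝 1) := by
    have hsmall : Tendsto (fun s : ℝ => (2 - 2 ^ α) / (s + 2 ^ α)) atTop (𝓝 0) :=
      tendsto_const_nhds.div_atTop (tendsto_atTop_add_const_right _ _ tendsto_id)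
    have hone : Tendsto (fun s : ℝ => 1 + (2 - 2 ^ α) / (s + 2 ^ α)) atTop (𝓝 1) := by
      simpa using hsmall.const_add 1
    refine hone.congr' ?_
    filter_upwards [eventually_ge_atTop 0] with s hs
    have : s + 2 ^ α ≠ 0 := (add_pos_of_nonneg_of_pos hs (rpow_pos_of_pos two_pos α)).ne'
    field_simp
    ring
  have h := ((continuousAt_logb (b := 2) one_ne_zero).tendsto.comp hratio).const_mul (1 - α)⁻¹
  rwa [logb_one, mul_zero] at h

section natCastRpow

variable {n : ℕ} {γ α : ℝ}

lemma condRenyi_spikeWeights_natCast_rpow (hn : 0 < n) :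
    condRenyi α (spikeWeights ((n : ℝ) ^ γ) n) = spikeEntropy α ((n : ℝ) ^ (γ * α - 1)) := by
  have hn' : (0 : ℝ) < n := Nat.cast_pos.2 hn
  rw [condRenyi_spikeWeights (rpow_pos_of_pos hn' γ) hn, ← rpow_mul hn'.le,
    rpow_sub_one hn'.ne']

lemma tendsto_condRenyi_spikeWeights_natCast_rpow_one (hα : α ≠ 1) (h : γ * α < 1) :
    Tendsto (fun n : ℕ => condRenyi α (spikeWeights ((n : ℝ) ^ γ) n)) atTop (𝓝 1) := by
  have hpow : Tendsto (fun n : ℕ => (n : ℝ) ^ (γ * α - 1)) atTop (𝓝 0) := by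
    simpa [Function.comp_def] using
      (tendsto_rpow_neg_atTop (sub_pos.2 h)).comp tendsto_natCast_atTop_atTop
  refine ((tendsto_spikeEntropy_zero hα).comp hpow).congr' ?_
  filter_upwards [eventually_gt_atTop 0] with n hn
  exact (condRenyi_spikeWeights_natCast_rpow hn).symm

lemma tendsto_condRenyi_spikeWeights_natCast_rpow_zero (h : 1 < γ * α) :
    Tendsto (fun n : ℕ => condRenyi α (spikeWeights ((n : ℝ) ^ γ) n)) atTop (𝓝 0) := by
  have hpow : Tendsto (fun n : ℕ => (n : ℝ) ^ (γ * α - 1)) atTop atTop :=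
    (tendsto_rpow_atTop (sub_pos.2 h)).comp tendsto_natCast_atTop_atTop
  refine ((tendsto_spikeEntropy_atTop α).comp hpow).congr' ?_
  filter_upwards [eventually_gt_atTop 0] with n hn
  exact (condRenyi_spikeWeights_natCast_rpow hn).symm

end natCastRpow

/-- for every `α₀ > 1` and every `ε > 0` there is a joint
distribution on `{0,1} × Y` (with `Y` a finite set, realized as `Fin m`) whose
conditional Rényi entropy of order `α₀` exceeds `1 - ε` while that of order
`α₀ + 1` is below `ε`: the two orders can simultaneously be arbitrarily close to
the opposite extremal values `1` and `0`. -/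
theorem condRenyi_opposite_extremes
    (α₀ : ℝ) (hα₀ : 1 < α₀) (ε : ℝ) (hε : 0 < ε) :
    ∃ (m : ℕ) (p : ZMod 2 × Fin m → ℝ),
      (∀ z, 0 ≤ p z) ∧ (∑ z, p z = 1) ∧
      1 - ε < condRenyi α₀ p ∧ condRenyi (α₀ + 1) p < ε := by
  set γ : ℝ := 2 / (2 * α₀ + 1)
  have hγ₀ : γ * α₀ < 1 := by
    rw [div_mul_eq_mul_div, div_lt_one (by linarith)]; linarith
  have hγ₁ : 1 < γ * (α₀ + 1) := by
    rw [div_mul_eq_mul_div, one_lt_div (by linarith)]; linarith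
  obtain ⟨n, hn, hlow, hhigh⟩ := ((eventually_gt_atTop 0).and
    (((tendsto_condRenyi_spikeWeights_natCast_rpow_one hα₀.ne' hγ₀).eventually
        (lt_mem_nhds (sub_lt_self 1 hε))).and
      ((tendsto_condRenyi_spikeWeights_natCast_rpow_zero hγ₁).eventually
        (gt_mem_nhds hε)))).exists
  have ha : (0 : ℝ) < (n : ℝ) ^ γ := rpow_pos_of_pos (Nat.cast_pos.2 hn) γ
  obtain ⟨p, hp, hp_sum, hp_eq⟩ := exists_condRenyi_eq_of_sum_pos (spikeWeights_nonneg ha.le)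
    (by rw [sum_spikeWeights]; positivity)
  exact ⟨n + 1, p, hp, hp_sum, by rwa [hp_eq], by rwa [hp_eq]⟩
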